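/- arXiv:2007.10530 — 3 statements merged into one kernel-verified Lean document; each statement's English description precedes it below -/
import Mathlib

section
/- Let q be an odd prime power, n ≥ 1, and let g be an n×n matrix over 𝔽_q which is orthogonal (g·gᵀ = I) and has det(g) = 1. Then dim_{𝔽_q} ker(g − I) ≡ n (mod 2) and dim_{𝔽_q} ker(g + I) ≡ 0 (mod 2). -/
/-!
For orthogonal `g` in odd characteristic, `det g = (-1) ^ rank (g - 1)`, by induction on this
rank. If the image of `g - 1` contains an anisotropic vector `v = g x - x`, the reflection `r`
in `v` maps `g x` to `x`, so the kernel of `r * g - 1` contains that of `g - 1` and also `x`;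
hence `rank (r * g - 1) = rank (g - 1) - 1`, and `det r = -1`. Otherwise the image of `g - 1`
is totally isotropic, which forces `g - 1` to be skew-symmetric with square zero: then `g` is
unipotent, and a skew-symmetric matrix has even rank in odd characteristic. The theorem follows
by applying this to `g` and to `-g` (of determinant `(-1) ^ n`) and using rank–nullity.
-/

open Matrix Module Polynomial

namespace LinearMap.BilinForm

variable {K V : Type*} [Field K] [AddCommGroup V] [Module K V] [FiniteDimensional K V]
  {B : LinearMap.BilinForm K V}

theorem even_finrank_of_nondegenerate_of_skew (hK : ringChar K ≠ 2) (hB : B.Nondegenerate)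
    (hskew : ∀ x y, -B x y = B y x) : Even (finrank K V) := by
  let b := Module.finBasis K V
  set G := BilinForm.toMatrix b B
  have hG : G.det ≠ 0 := (nondegenerate_iff_det_ne_zero b).mp hB
  have hGT : Gᵀ = -G := by
    ext i j
    exact (hskew _ _).symm
  have hdet : (-1) ^ finrank K V * G.det = G.det := by
    conv_rhs => rw [← det_transpose, hGT, det_neg, Fintype.card_fin]
  rw [← neg_one_pow_eq_one_iff_even (Ring.neg_one_ne_one_of_char_ne_two hK)]
  exact (mul_eq_right₀ hG).mp hdet

theorem even_finrank_quotient_ker_of_skew (hK : ringChar K ≠ 2)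
    (hskew : ∀ x y, -B x y = B y x) : Even (finrank K (V ⧸ LinearMap.ker B)) := by
  obtain ⟨W, hW⟩ := (LinearMap.ker B).exists_isCompl
  have hrefl : B.IsRefl := fun x y h => by rw [← hskew, h, neg_zero]
  have hnd : (B.restrict W).Nondegenerate := by
    have hkerB : ∀ x ∈ W, ∀ y ∈ LinearMap.ker B, B x y = 0 := fun x _ y hy =>
      hrefl _ _ (by rw [LinearMap.mem_ker.mp hy, LinearMap.zero_apply])
    rw [nondegenerate_iff_ker_eq_bot, ker_restrict_eq_of_codisjoint hW.codisjoint.symm hkerB]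
    exact Submodule.disjoint_iff_comap_eq_bot.mp hW.disjoint.symm
  rw [(Submodule.quotientEquivOfIsCompl _ W hW).finrank_eq]
  exact even_finrank_of_nondegenerate_of_skew hK hnd fun x y => hskew x y

end LinearMap.BilinForm

namespace Matrix

section CommRing

variable {R : Type*} [CommRing R] {ι : Type*} [Fintype ι] [DecidableEq ι]

theorem det_one_add_of_isNilpotent [IsDomain R] {N : Matrix ι ι R} (hN : IsNilpotent N) :
    (1 + N).det = 1 := by
  -- `det (1 + X • N)` is a unit of `R[X]`, hence constant: its values at `1` and `0` agree.
  obtain ⟨r, -, hr⟩ := Polynomial.isUnit_iff.mp (isUnit_charpolyRev_of_isNilpotent hN.neg)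
  have hr1 : r = 1 := by simpa [← hr] using eval_charpolyRev (M := -N)
  have := congrArg (evalRingHom 1) hr
  rw [charpolyRev, RingHom.map_det, hr1, coe_evalRingHom, eval_C] at this
  rw [this]
  congr 1
  ext i j
  simp [sub_eq_add_neg, one_apply, apply_ite]

theorem transpose_eq_neg_of_dotProduct_mulVec_self {M : Matrix ι ι R}
    (hM : ∀ x, x ⬝ᵥ M *ᵥ x = 0) : Mᵀ = -M := by
  have halt : (toBilin' M).IsAlt := fun x => by rw [toBilin'_apply']; exact hM x
  ext i j
  simpa using (halt.neg_eq (Pi.single i 1) (Pi.single j 1)).symm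

theorem sub_one_transpose_mul_sub_one {g : Matrix ι ι R} (hg : gᵀ * g = 1) :
    (g - 1)ᵀ * (g - 1) = -((g - 1)ᵀ + (g - 1)) := by
  rw [transpose_sub, transpose_one, sub_mul, mul_sub, mul_sub, hg]
  noncomm_ring

end CommRing

section Rank

variable {K : Type*} [Field K] {m n : Type*} [Fintype n]

theorem rank_add_finrank_ker (M : Matrix m n K) :
    M.rank + finrank K (LinearMap.ker M.mulVecLin) = Fintype.card n := by
  rw [rank, LinearMap.finrank_range_add_finrank_ker, finrank_fintype_fun_eq_card]

theorem rank_add_le (A B : Matrix m n K) : (A + B).rank ≤ A.rank + B.rank := by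
  rw [rank, rank, rank, mulVecLin_add]
  exact (Submodule.finrank_mono (LinearMap.range_add_le _ _)).trans
    (Submodule.finrank_add_le_finrank_add_finrank _ _)

theorem rank_neg (A : Matrix m n K) : (-A).rank = A.rank := by
  rw [← neg_one_smul K A, rank_smul_of_mem_nonZeroDivisors]
  simp

end Rank

variable {K : Type*} [Field K] {ι : Type*} [Fintype ι] [DecidableEq ι]

theorem even_rank_of_transpose_eq_neg (hK : ringChar K ≠ 2) {M : Matrix ι ι K} (hM : Mᵀ = -M) :
    Even M.rank := by
  have hskew : ∀ x y, -toBilin' M x y = toBilin' M y x := by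
    intro x y
    rw [toBilin'_apply', toBilin'_apply', dotProduct_mulVec, ← mulVec_transpose, hM, neg_mulVec,
      neg_dotProduct, dotProduct_comm, neg_neg]
  have hker : LinearMap.ker (toBilin' M) = LinearMap.ker M.mulVecLin := by
    ext x
    rw [LinearMap.mem_ker, LinearMap.mem_ker, mulVecLin_apply, LinearMap.ext_iff,
      ← dotProduct_eq_zero_iff]
    refine forall_congr' fun y => ?_
    rw [LinearMap.zero_apply, ← hskew y x, toBilin'_apply', neg_eq_zero, dotProduct_comm]
  rw [rank, ← M.mulVecLin.quotKerEquivRange.finrank_eq, ← hker]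
  exact LinearMap.BilinForm.even_finrank_quotient_ker_of_skew hK hskew

-- The reflection in the hyperplane orthogonal to `v`; it is `1` when `v ⬝ᵥ v = 0` (as `2 / 0 = 0`).
def reflection (v : ι → K) : Matrix ι ι K := 1 - (2 / (v ⬝ᵥ v)) • vecMulVec v v

theorem reflection_mulVec (v y : ι → K) :
    reflection v *ᵥ y = y - (2 / (v ⬝ᵥ v) * (v ⬝ᵥ y)) • v := by
  rw [reflection, sub_mulVec, one_mulVec, smul_mulVec, vecMulVec_mulVec, op_smul_eq_smul,
    smul_smul]

theorem transpose_reflection (v : ι → K) : (reflection v)ᵀ = reflection v := by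
  rw [reflection, transpose_sub, transpose_one, transpose_smul, transpose_vecMulVec]

theorem rank_reflection_sub_one_le (v : ι → K) : (reflection v - 1).rank ≤ 1 := by
  rw [reflection, sub_sub_cancel_left, ← neg_smul, ← smul_vecMulVec]
  exact rank_vecMulVec_le _ _

theorem reflection_mul_self {v : ι → K} (hv : v ⬝ᵥ v ≠ 0) : reflection v * reflection v = 1 := by
  have hc : 2 / (v ⬝ᵥ v) * (2 / (v ⬝ᵥ v)) * (v ⬝ᵥ v) = 2 / (v ⬝ᵥ v) + 2 / (v ⬝ᵥ v) := by
    field_simp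
    ring
  rw [reflection, sub_mul, mul_sub, mul_sub, smul_mul_smul_comm, vecMulVec_mul_vecMulVec,
    vecMulVec_smul, smul_smul, hc, add_smul]
  noncomm_ring

theorem det_reflection {v : ι → K} (hv : v ⬝ᵥ v ≠ 0) : (reflection v).det = -1 := by
  rw [reflection, sub_eq_add_neg, ← neg_smul, ← smul_vecMulVec, vecMulVec_eq Unit,
    det_one_add_replicateCol_mul_replicateRow, dotProduct_smul, smul_eq_mul]
  field_simp
  ring

theorem reflection_sub_mulVec_of_dotProduct_self_eq {a b : ι → K} (hab : a ⬝ᵥ a = b ⬝ᵥ b)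
    (h : (a - b) ⬝ᵥ (a - b) ≠ 0) : reflection (a - b) *ᵥ a = b := by
  have hc : 2 / ((a - b) ⬝ᵥ (a - b)) * ((a - b) ⬝ᵥ a) = 1 := by
    rw [div_mul_eq_mul_div, div_eq_one_iff_eq h]
    simp only [sub_dotProduct, dotProduct_sub, dotProduct_comm b a, hab]
    ring
  rw [reflection_mulVec, hc, one_smul, sub_sub_cancel]

theorem reflection_mulVec_of_dotProduct_eq_zero {v y : ι → K} (hy : v ⬝ᵥ y = 0) :
    reflection v *ᵥ y = y := by
  rw [reflection_mulVec, hy, mul_zero, zero_smul, sub_zero]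

variable {g : Matrix ι ι K}

theorem sub_one_transpose_eq_neg_of_isotropic (hK : ringChar K ≠ 2) (hg : gᵀ * g = 1)
    (hiso : ∀ x, ((g - 1) *ᵥ x) ⬝ᵥ ((g - 1) *ᵥ x) = 0) : (g - 1)ᵀ = -(g - 1) := by
  refine transpose_eq_neg_of_dotProduct_mulVec_self fun x => ?_
  have hT : x ⬝ᵥ (g - 1)ᵀ *ᵥ x = x ⬝ᵥ (g - 1) *ᵥ x := by
    rw [mulVec_transpose, dotProduct_comm, dotProduct_mulVec]
  have h : ((g - 1) *ᵥ x) ⬝ᵥ ((g - 1) *ᵥ x) = -(2 * (x ⬝ᵥ (g - 1) *ᵥ x)) := by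
    have hgram : ((g - 1) *ᵥ x) ⬝ᵥ ((g - 1) *ᵥ x) = x ⬝ᵥ ((g - 1)ᵀ * (g - 1)) *ᵥ x := by
      rw [← mulVec_mulVec, dotProduct_mulVec x, vecMul_transpose]
    rw [hgram, sub_one_transpose_mul_sub_one hg, neg_mulVec, add_mulVec, dotProduct_neg,
      dotProduct_add, hT, two_mul]
  rw [hiso, zero_eq_neg, mul_eq_zero] at h
  exact h.resolve_left (Ring.two_ne_zero hK)

theorem rank_reflection_mul_sub_one_add_one (hg : gᵀ * g = 1) {x : ι → K}
    (hx : ((g - 1) *ᵥ x) ⬝ᵥ ((g - 1) *ᵥ x) ≠ 0) :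
    (reflection ((g - 1) *ᵥ x) * g - 1).rank + 1 = (g - 1).rank := by
  set r := reflection ((g - 1) *ᵥ x) with hr
  have hdot : ∀ y z, (g *ᵥ y) ⬝ᵥ (g *ᵥ z) = y ⬝ᵥ z := fun y z => by
    rw [dotProduct_mulVec, ← mulVec_transpose, mulVec_mulVec, hg, one_mulVec]
  have hle : LinearMap.ker (g - 1).mulVecLin ≤ LinearMap.ker (r * g - 1).mulVecLin := by
    intro y hy
    have hgy : g *ᵥ y = y := by simpa [sub_mulVec, sub_eq_zero] using hy
    have hvy : ((g - 1) *ᵥ x) ⬝ᵥ y = 0 := by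
      rw [sub_mulVec, one_mulVec, sub_dotProduct, ← hdot x y, hgy, sub_self]
    rw [LinearMap.mem_ker, mulVecLin_apply, sub_mulVec, one_mulVec, ← mulVec_mulVec, hgy, hr,
      reflection_mulVec_of_dotProduct_eq_zero hvy, sub_self]
  have hxr : r *ᵥ (g *ᵥ x) = x := by
    rw [sub_mulVec, one_mulVec] at hx
    simp only [r, sub_mulVec, one_mulVec]
    exact reflection_sub_mulVec_of_dotProduct_self_eq (hdot x x) hx
  have hlt : LinearMap.ker (g - 1).mulVecLin < LinearMap.ker (r * g - 1).mulVecLin := by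
    refine lt_of_le_of_ne hle fun heq => hx ?_
    have hx0 : (g - 1) *ᵥ x = 0 := by
      rw [← mulVecLin_apply, ← LinearMap.mem_ker, heq, LinearMap.mem_ker, mulVecLin_apply,
        sub_mulVec, one_mulVec, ← mulVec_mulVec, hxr, sub_self]
    rw [hx0, zero_dotProduct]
  have hrank : (g - 1).rank ≤ (r * g - 1).rank + 1 := by
    have hr : r * r = 1 := reflection_mul_self (by simpa [sub_mulVec] using hx)
    calc (g - 1).rank = (r * (r * g - 1) + (r - 1)).rank := by
          rw [mul_sub, ← mul_assoc, hr, one_mul, mul_one, sub_add_sub_cancel]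
      _ ≤ (r * (r * g - 1)).rank + (r - 1).rank := rank_add_le _ _
      _ ≤ (r * g - 1).rank + 1 :=
          add_le_add (rank_mul_le_right _ _) (rank_reflection_sub_one_le _)
  have := Submodule.finrank_lt_finrank_of_lt hlt
  have := rank_add_finrank_ker (g - 1)
  have := rank_add_finrank_ker (r * g - 1)
  omega

theorem det_eq_neg_one_pow_rank_sub_one (hK : ringChar K ≠ 2) (hg : g * gᵀ = 1) :
    g.det = (-1) ^ (g - 1).rank := by
  induction hρ : (g - 1).rank using Nat.strong_induction_on generalizing g with
  | _ ρ ih =>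
  have hg' : gᵀ * g = 1 := mul_eq_one_comm.mp hg
  by_cases hiso : ∀ x, ((g - 1) *ᵥ x) ⬝ᵥ ((g - 1) *ᵥ x) = 0
  · have hskew := sub_one_transpose_eq_neg_of_isotropic hK hg' hiso
    have hsq : (g - 1) ^ 2 = 0 := by
      have := sub_one_transpose_mul_sub_one hg'
      rw [hskew, neg_add_cancel, neg_zero, neg_mul, neg_eq_zero] at this
      rw [sq, this]
    rw [← hρ, (even_rank_of_transpose_eq_neg hK hskew).neg_one_pow, ← add_sub_cancel 1 g,
      det_one_add_of_isNilpotent ⟨2, hsq⟩]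
  · obtain ⟨x, hx⟩ := not_forall.mp hiso
    have hrank := rank_reflection_mul_sub_one_add_one hg' hx
    set r := reflection ((g - 1) *ᵥ x)
    have hrr : r * r = 1 := reflection_mul_self hx
    have hrg : r * g * (r * g)ᵀ = 1 := by
      rw [transpose_mul, transpose_reflection, mul_assoc, ← mul_assoc g, hg, one_mul, hrr]
    calc g.det = (r * (r * g)).det := by rw [← mul_assoc, hrr, one_mul]
      _ = -1 * (-1) ^ (ρ - 1) := by
        rw [det_mul, det_reflection hx, ih (ρ - 1) (by omega) hrg (by omega)]
      _ = (-1) ^ ρ := by rw [← pow_succ', Nat.sub_add_cancel (by omega)]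

end Matrix

namespace McKayGraphs

theorem finrank_ker_parity_of_specialOrthogonal_general (F : Type) [Field F] [Fintype F]
    (hq : Odd (Fintype.card F)) (n : ℕ)
    (g : Matrix (Fin n) (Fin n) F) (horth : g * gᵀ = 1) (hdet : g.det = 1) :
    Module.finrank F (LinearMap.ker (Matrix.mulVecLin (g - 1))) % 2 = n % 2 ∧
    Module.finrank F (LinearMap.ker (Matrix.mulVecLin (g + 1))) % 2 = 0 := by
  have hF : ringChar F ≠ 2 := by
    rwa [Ne, FiniteField.even_card_iff_char_two, ← Nat.even_iff, Nat.not_even_iff_odd]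
  have hneg : (-1 : F) ≠ 1 := Ring.neg_one_ne_one_of_char_ne_two hF
  have hsub : Even (g - 1).rank := by
    rw [← neg_one_pow_eq_one_iff_even hneg, ← det_eq_neg_one_pow_rank_sub_one hF horth, hdet]
  have hadd : Even (n + (g + 1).rank) := by
    have hnegg : (-g) * (-g)ᵀ = 1 := by rw [transpose_neg, neg_mul_neg, horth]
    have h := det_eq_neg_one_pow_rank_sub_one hF hnegg
    rw [det_neg, hdet, mul_one, Fintype.card_fin, ← neg_add', rank_neg] at h
    rw [← neg_one_pow_eq_one_iff_even hneg, pow_add, ← h, ← pow_add, Even.neg_one_pow ⟨n, rfl⟩]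
  have h₁ := rank_add_finrank_ker (g - 1)
  have h₂ := rank_add_finrank_ker (g + 1)
  rw [Fintype.card_fin] at h₁ h₂
  rw [Nat.even_iff] at hsub hadd
  omega

/-- **Equation (22) of Liebeck–Shalev–Tiep.** Let `q` be odd and `g ∈ SO_n(q)`, i.e.
`g·gᵀ = 1` and `det g = 1` over `𝔽_q`. Then `dim ker(g − 1) ≡ n (mod 2)` and
`dim ker(g + 1) ≡ 0 (mod 2)`. -/
theorem finrank_ker_parity_of_specialOrthogonal (F : Type) [Field F] [Fintype F]
    (hq : Odd (Fintype.card F)) (n : ℕ) (hn : 1 ≤ n)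
    (g : Matrix (Fin n) (Fin n) F) (horth : g * gᵀ = 1) (hdet : g.det = 1) :
    Module.finrank F (LinearMap.ker (Matrix.mulVecLin (g - 1))) % 2 = n % 2 ∧
    Module.finrank F (LinearMap.ker (Matrix.mulVecLin (g + 1))) % 2 = 0 :=
  finrank_ker_parity_of_specialOrthogonal_general F hq n g horth hdet

end McKayGraphs
end

section
/- Let m ≥ 6 be an integer and set n = m(m+1)/2. Let H_m = ∏_{r=0}^{m−1} (2r+1)!! be the product of all hook lengths of the staircase partition (m, m−1, …, 2, 1) of n. Then n! / H_m ≥ (n!)^{5/11}; equivalently, (n!)^{6} ≥ H_m^{11}. (By the hook length formula, n!/H_m is the degree χ_m(1) of the staircase irreducible character χ^{(m,m−1,…,1)} of the symmetric group S_n, so this says χ_m(1) ≥ |S_n|^{5/11}.) -/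
/-!
Put `n = m(m+1)/2`. Passing from `m` to `m + 1` multiplies `H_m ^ 11` by `((2m+1)‼) ^ 11`, while
`n! ^ 6` gets multiplied by `((n+1) ⋯ (n+m+1)) ^ 6 ≥ (n+1) ^ (6(m+1))`. So the theorem follows by
induction from `m = 7` once `((2m+1)‼) ^ 11 ≤ (n+1) ^ (6(m+1))` for `m ≥ 7`. By AM–GM
`(2m+1)‼ ≤ (m+1) ^ (m+1)`, and `(m+1) ^ 11 ≤ (n+1) ^ 6` as soon as `m ≥ 69`; the finitely many
remaining cases, and `m = 6, 7`, are checked by computation. Taking eleventh roots gives the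
real form.
-/

open Nat
open scoped Nat

namespace McKayGraphs

open Finset

theorem doubleFactorial_two_mul_add_one_le (m : ℕ) : (2 * m + 1)‼ ≤ (m + 1) ^ (m + 1) := by
  have hprod : (2 * m + 1)‼ = ∏ i ∈ range (m + 1), (2 * i + 1) := by
    rw [prod_range_succ', doubleFactorial_eq_prod_odd]
    simp
  -- pair the factors `2i+1` and `2(m-i)+1`, whose mean is `m+1`
  have hpair : ∀ i ∈ range (m + 1), (2 * i + 1) * (2 * (m - i) + 1) ≤ (m + 1) ^ 2 := by
    intro i hi
    obtain ⟨k, rfl⟩ := Nat.exists_eq_add_of_le (Nat.lt_succ_iff.mp (mem_range.mp hi))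
    rw [Nat.add_sub_cancel_left]
    nlinarith [sq_nonneg ((i : ℤ) - k)]
  have hreflect : ∏ i ∈ range (m + 1), (2 * (m - i) + 1) = ∏ i ∈ range (m + 1), (2 * i + 1) := by
    simpa using prod_range_reflect (fun i => 2 * i + 1) (m + 1)
  have hsq : ((2 * m + 1)‼) ^ 2 ≤ ((m + 1) ^ (m + 1)) ^ 2 :=
    calc ((2 * m + 1)‼) ^ 2
        = ∏ i ∈ range (m + 1), (2 * i + 1) * (2 * (m - i) + 1) := by
          rw [prod_mul_distrib, hreflect, ← hprod, sq]
      _ ≤ ∏ _i ∈ range (m + 1), (m + 1) ^ 2 := prod_le_prod' hpair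
      _ = ((m + 1) ^ (m + 1)) ^ 2 := by rw [prod_const, card_range, ← pow_mul, ← pow_mul, mul_comm]
  exact (Nat.pow_le_pow_iff_left two_ne_zero).mp hsq

theorem triangle_succ (m : ℕ) : (m + 1) * (m + 1 + 1) / 2 = m * (m + 1) / 2 + (m + 1) := by
  rw [show (m + 1) * (m + 1 + 1) = m * (m + 1) + (m + 1) * 2 by ring, Nat.add_mul_div_right _ _ two_pos]

theorem succ_pow_eleven_le (m : ℕ) (hm : 69 ≤ m) : (m + 1) ^ 11 ≤ (m * (m + 1) / 2 + 1) ^ 6 := by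
  have htri : m * (m + 1) ≤ 2 * (m * (m + 1) / 2 + 1) := by
    generalize m * (m + 1) = p
    omega
  -- `(m+1)/m ≤ 70/69` and `64 · 70^5 ≤ 69^6`
  have hratio : (69 * (m + 1)) ^ 5 ≤ (70 * m) ^ 5 := Nat.pow_le_pow_left (by omega) 5
  have hm6 : 69 * m ^ 5 ≤ m ^ 6 := (Nat.mul_le_mul_right _ hm).trans_eq (by ring)
  have hscaled : 2 ^ 6 * 69 ^ 5 * (m + 1) ^ 5 ≤ 69 ^ 5 * m ^ 6 :=
    calc 2 ^ 6 * 69 ^ 5 * (m + 1) ^ 5 = 2 ^ 6 * (69 * (m + 1)) ^ 5 := by ring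
      _ ≤ 2 ^ 6 * (70 * m) ^ 5 := Nat.mul_le_mul_left _ hratio
      _ = 2 ^ 6 * 70 ^ 5 * m ^ 5 := by ring
      _ ≤ 69 ^ 5 * (69 * m ^ 5) := by rw [← mul_assoc]; exact Nat.mul_le_mul_right _ (by norm_num)
      _ ≤ 69 ^ 5 * m ^ 6 := Nat.mul_le_mul_left _ hm6
  have h64 : 2 ^ 6 * (m + 1) ^ 5 ≤ m ^ 6 :=
    Nat.le_of_mul_le_mul_left (by linarith [hscaled]) (by norm_num : 0 < 69 ^ 5)
  refine Nat.le_of_mul_le_mul_left ?_ (by norm_num : 0 < 2 ^ 6)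
  calc 2 ^ 6 * (m + 1) ^ 11 = (2 ^ 6 * (m + 1) ^ 5) * (m + 1) ^ 6 := by ring
    _ ≤ m ^ 6 * (m + 1) ^ 6 := Nat.mul_le_mul_right _ h64
    _ = (m * (m + 1)) ^ 6 := (mul_pow _ _ _).symm
    _ ≤ (2 * (m * (m + 1) / 2 + 1)) ^ 6 := Nat.pow_le_pow_left htri 6
    _ = 2 ^ 6 * (m * (m + 1) / 2 + 1) ^ 6 := mul_pow _ _ _

theorem doubleFactorial_pow_eleven_le (m : ℕ) (hm : 7 ≤ m) :
    ((2 * m + 1)‼) ^ 11 ≤ (m * (m + 1) / 2 + 1) ^ (6 * (m + 1)) := by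
  rcases lt_or_ge m 69 with hsmall | hlarge
  · have hcases : ∀ m < 69, 7 ≤ m →
        ((2 * m + 1)‼) ^ 11 ≤ (m * (m + 1) / 2 + 1) ^ (6 * (m + 1)) := by
      decide +kernel
    exact hcases m hsmall hm
  · calc ((2 * m + 1)‼) ^ 11 ≤ ((m + 1) ^ (m + 1)) ^ 11 :=
          Nat.pow_le_pow_left (doubleFactorial_two_mul_add_one_le m) 11
      _ = ((m + 1) ^ 11) ^ (m + 1) := by rw [← pow_mul, ← pow_mul, mul_comm]
      _ ≤ ((m * (m + 1) / 2 + 1) ^ 6) ^ (m + 1) :=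
          Nat.pow_le_pow_left (succ_pow_eleven_le m hlarge) _
      _ = (m * (m + 1) / 2 + 1) ^ (6 * (m + 1)) := (pow_mul _ _ _).symm

theorem staircase_hook_product_pow_le (m : ℕ) (hm : 6 ≤ m) :
    (∏ r ∈ range m, (2 * r + 1)‼) ^ 11 ≤ ((m * (m + 1) / 2)!) ^ 6 := by
  obtain rfl | hm7 := hm.eq_or_lt
  · decide +kernel
  clear hm
  induction m, hm7 using Nat.le_induction with
  | base => decide +kernel
  | succ m hm ih =>
    set n := m * (m + 1) / 2
    calc (∏ r ∈ range (m + 1), (2 * r + 1)‼) ^ 11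
        = (∏ r ∈ range m, (2 * r + 1)‼) ^ 11 * ((2 * m + 1)‼) ^ 11 := by
          rw [prod_range_succ, mul_pow]
      _ ≤ (n !) ^ 6 * (n + 1) ^ (6 * (m + 1)) :=
          Nat.mul_le_mul ih (doubleFactorial_pow_eleven_le m hm)
      _ = (n ! * (n + 1) ^ (m + 1)) ^ 6 := by rw [mul_pow, ← pow_mul, mul_comm 6]
      _ ≤ ((n + (m + 1))!) ^ 6 := Nat.pow_le_pow_left Nat.factorial_mul_pow_le_factorial 6
      _ = (((m + 1) * (m + 1 + 1) / 2)!) ^ 6 := by rw [triangle_succ]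

theorem rpow_one_sub_le_div_of_pow_le {a b : ℝ} {k n : ℕ} (ha : 0 < a) (hb : 0 < b)
    (hn : n ≠ 0) (h : b ^ n ≤ a ^ k) : a ^ (1 - (k : ℝ) / n) ≤ a / b := by
  have hn' : (0 : ℝ) < n := by exact_mod_cast Nat.pos_of_ne_zero hn
  have hroot : b ≤ a ^ ((k : ℝ) / n) := by
    rw [div_eq_mul_inv, Real.rpow_mul ha.le, Real.rpow_natCast,
      Real.le_rpow_inv_iff_of_pos hb.le (by positivity) hn', Real.rpow_natCast]
    exact h
  rw [Real.rpow_sub ha, Real.rpow_one]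
  exact div_le_div_of_nonneg_left ha.le hb hroot

/-- **Lemma 4.1 of Liebeck–Shalev–Tiep.** Let `m ≥ 6`, `n = m(m+1)/2`, and let
`H_m = ∏_{r=0}^{m−1} (2r+1)‼` be the product of the hook lengths of the staircase
partition `(m, m−1, …, 1)` of `n`. Then `n!/H_m ≥ (n!)^{5/11}`, equivalently
`(n!)^6 ≥ H_m^{11}`; i.e. the degree of the staircase character `χ_m` of `S_n`
satisfies `χ_m(1) ≥ |S_n|^{5/11}`. -/
theorem staircase_degree_lower_bound (m : ℕ) (hm : 6 ≤ m)
    (n : ℕ) (hn : n = m * (m + 1) / 2)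
    (H : ℕ) (hH : H = ∏ r ∈ Finset.range m, (2 * r + 1)‼) :
    ((n ! : ℝ) / H ≥ (n ! : ℝ) ^ ((5 : ℝ) / 11)) ∧ (n ! ^ 6 ≥ H ^ 11) := by
  have hnat : H ^ 11 ≤ n ! ^ 6 := by
    rw [hH, hn]
    exact staircase_hook_product_pow_le m hm
  refine ⟨?_, hnat⟩
  have hH₀ : (0 : ℝ) < H := by
    rw [hH]
    exact_mod_cast prod_pos fun r _ => doubleFactorial_pos (2 * r + 1)
  have hreal : (H : ℝ) ^ 11 ≤ (n ! : ℝ) ^ 6 := by exact_mod_cast hnat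
  have hexp : (5 : ℝ) / 11 = 1 - ((6 : ℕ) : ℝ) / (11 : ℕ) := by norm_num
  rw [ge_iff_le, hexp]
  exact rpow_one_sub_le_div_of_pow_le (by positivity) hH₀ (by norm_num) hreal

end McKayGraphs
end

section
/- For every integer m ≥ 3, ∏_{i=1}^{2m+3} (m(m+1)/2 + i) > ((2m+3)!! · (2m+1)!!)^{11/6}; equivalently, (∏_{i=1}^{2m+3} (m(m+1)/2 + i))^{6} > ((2m+3)!! · (2m+1)!!)^{11}. -/
open Nat
open scoped Nat

namespace McKayGraphs

set_option maxHeartbeats 1000000 in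
private lemma pow_lb (x y : ℕ) : ∀ n : ℕ,
    24 * x ^ (n+4) + 24 * (n+4) * x ^ (n+3) * y
      + 12 * (n+4) * (n+3) * x ^ (n+2) * y ^ 2
      + 4 * (n+4) * (n+3) * (n+2) * x ^ (n+1) * y ^ 3
      + (n+4) * (n+3) * (n+2) * (n+1) * x ^ n * y ^ 4
    ≤ 24 * (x + y) ^ (n+4)
  | 0 => le_of_eq (by ring)
  | (n+1) => by
    have ih := pow_lb x y n
    have h1 : (x + y) * (24 * x ^ (n+4) + 24 * (n+4) * x ^ (n+3) * y
        + 12 * (n+4) * (n+3) * x ^ (n+2) * y ^ 2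
        + 4 * (n+4) * (n+3) * (n+2) * x ^ (n+1) * y ^ 3
        + (n+4) * (n+3) * (n+2) * (n+1) * x ^ n * y ^ 4)
        = (24 * x ^ (n+1+4) + 24 * (n+1+4) * x ^ (n+1+3) * y
          + 12 * (n+1+4) * (n+1+3) * x ^ (n+1+2) * y ^ 2
          + 4 * (n+1+4) * (n+1+3) * (n+1+2) * x ^ (n+1+1) * y ^ 3
          + (n+1+4) * (n+1+3) * (n+1+2) * (n+1+1) * x ^ (n+1) * y ^ 4)
          + (n+4) * (n+3) * (n+2) * (n+1) * x ^ n * y ^ 5 := by ring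
    calc 24 * x ^ (n+1+4) + 24 * (n+1+4) * x ^ (n+1+3) * y
          + 12 * (n+1+4) * (n+1+3) * x ^ (n+1+2) * y ^ 2
          + 4 * (n+1+4) * (n+1+3) * (n+1+2) * x ^ (n+1+1) * y ^ 3
          + (n+1+4) * (n+1+3) * (n+1+2) * (n+1+1) * x ^ (n+1) * y ^ 4
        ≤ (x + y) * (24 * x ^ (n+4) + 24 * (n+4) * x ^ (n+3) * y
          + 12 * (n+4) * (n+3) * x ^ (n+2) * y ^ 2
          + 4 * (n+4) * (n+3) * (n+2) * x ^ (n+1) * y ^ 3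
          + (n+4) * (n+3) * (n+2) * (n+1) * x ^ n * y ^ 4) := by
            rw [h1]; exact Nat.le_add_right _ _
      _ ≤ (x + y) * (24 * (x + y) ^ (n+4)) := Nat.mul_le_mul_left _ ih
      _ = 24 * (x + y) ^ (n+1+4) := by ring

private lemma prod_shift (t n : ℕ) :
    ∏ i ∈ Finset.Icc 1 n, (t + i) = ∏ i ∈ Finset.range n, (t + 1 + i) := by
  rw [← Finset.Ico_add_one_right_eq_Icc, Finset.prod_Ico_eq_prod_range]
  exact Finset.prod_congr (by simp) fun i _ => by ring

private lemma combine (E P1 X W R1 R2m R2 : ℕ) (hWpos : 0 < W)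
    (hL1 : 15 * W ≤ X) (hL2 : E ≤ 15^6 * P1^6)
    (hE1 : X * R1 ≤ R2m * W) (hR2 : R2 = R2m * P1) :
    E * R1^6 ≤ R2^6 := by
  have hYpos : 0 < W^6 := pow_pos hWpos _
  refine Nat.le_of_mul_le_mul_right ?_ hYpos
  calc E * R1^6 * W^6
      ≤ (15^6*P1^6) * R1^6 * W^6 :=
        Nat.mul_le_mul_right _ (Nat.mul_le_mul_right _ hL2)
    _ = P1^6 * (15 * W)^6 * R1^6 := by ring
    _ ≤ P1^6 * X^6 * R1^6 :=
        Nat.mul_le_mul_right _ (Nat.mul_le_mul_left _ (Nat.pow_le_pow_left hL1 6))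
    _ = (P1 * (X * R1))^6 := by ring
    _ ≤ (P1 * (R2m * W))^6 := Nat.pow_le_pow_left (Nat.mul_le_mul_left _ hE1) 6
    _ = (R2 * W)^6 := by rw [hR2]; ring
    _ = R2^6 * W^6 := by ring

private lemma finish_step (Dold Dnew E Pold Pnew R1 R2 : ℕ)
    (hD : Dnew = E * Dold) (hPP : Pnew * R1 = Pold * R2)
    (hmain : E^11 * R1^6 ≤ R2^6) (ih : Dold^11 < Pold^6) (hR1 : 0 < R1)
    (hE : 0 < E) :
    Dnew^11 < Pnew^6 := by
  refine lt_of_mul_lt_mul_right ?_ (Nat.zero_le (R1^6))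
  calc Dnew^11 * R1^6
      = Dold^11 * (E^11 * R1^6) := by rw [hD]; ring
    _ < Pold^6 * (E^11 * R1^6) := by
        refine Nat.mul_lt_mul_of_lt_of_le ih (le_refl _) ?_
        exact Nat.mul_pos (pow_pos hE _) (pow_pos hR1 _)
    _ ≤ Pold^6 * R2^6 := Nat.mul_le_mul_left _ hmain
    _ = (Pold * R2)^6 := by ring
    _ = (Pnew * R1)^6 := by rw [hPP]
    _ = Pnew^6 * R1^6 := by ring

private def NatIneq (m : ℕ) : Prop :=
  ((2*m+3)‼ * (2*m+1)‼) ^ 11 < (∏ i ∈ Finset.Icc 1 (2*m+3), (m*(m+1)/2 + i)) ^ 6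

private lemma base3 : NatIneq 3 := by
  unfold NatIneq
  have h : (∏ i ∈ Finset.Icc 1 (2*3+3), (3*(3+1)/2 + i)) = 1816214400 := by decide
  have h9 : (2*3+3)‼ = 945 := by decide
  have h7 : (2*3+1)‼ = 105 := by decide
  rw [h, h9, h7]
  norm_num

private lemma base4 : NatIneq 4 := by
  unfold NatIneq
  have h : (∏ i ∈ Finset.Icc 1 (2*4+3), (4*(4+1)/2 + i)) = 14079294028800 := by decide
  have h11 : (2*4+3)‼ = 10395 := by decide
  have h9 : (2*4+1)‼ = 945 := by decide
  rw [h, h11, h9]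
  norm_num


set_option maxHeartbeats 1000000 in
private lemma step (k : ℕ) (ih : NatIneq (k+4)) : NatIneq (k+5) := by
  unfold NatIneq at ih ⊢
  set T : ℕ := (k+4)*((k+4)+1)/2 with hTdef
  set T' : ℕ := (k+5)*((k+5)+1)/2 with hT'def
  have ht : 2 * T = (k+4)*(k+5) := by
    rw [hTdef, Nat.mul_div_cancel' ((Nat.even_mul_succ_self (k+4)).two_dvd)]
  have ht' : 2 * T' = (k+5)*(k+6) := by
    rw [hT'def, Nat.mul_div_cancel' ((Nat.even_mul_succ_self (k+5)).two_dvd)]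
  have hsplitTT : (k+5)*(k+6) = (k+4)*(k+5) + 2*(k+5) := by ring
  have hT'T : T' = T + (k+5) := by linarith [ht, ht', hsplitTT]
  -- products in range form
  have hP : (∏ i ∈ Finset.Icc 1 (2*(k+4)+3), (T + i))
      = ∏ i ∈ Finset.range (2*k+11), (T + 1 + i) := by
    rw [show 2*(k+4)+3 = 2*k+11 from by ring, prod_shift]
  have hP' : (∏ i ∈ Finset.Icc 1 (2*(k+5)+3), (T' + i))
      = ∏ i ∈ Finset.range (2*k+13), (T + 1 + (k+5+i)) := by
    rw [show 2*(k+5)+3 = 2*k+13 from by ring, prod_shift]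
    exact Finset.prod_congr rfl fun i _ => by rw [hT'T]; ring
  have hsplit1 : (∏ i ∈ Finset.range (2*k+11), (T + 1 + i))
        * (∏ i ∈ Finset.range (k+7), (T + 1 + (2*k+11+i)))
      = ∏ i ∈ Finset.range (3*k+18), (T + 1 + i) := by
    rw [show 3*k+18 = (2*k+11)+(k+7) from by ring]
    exact (Finset.prod_range_add _ _ _).symm
  have hsplit2 : (∏ i ∈ Finset.range (k+5), (T + 1 + i))
        * (∏ i ∈ Finset.range (2*k+13), (T + 1 + (k+5+i)))
      = ∏ i ∈ Finset.range (3*k+18), (T + 1 + i) := by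
    rw [show 3*k+18 = (k+5)+(2*k+13) from by ring]
    exact (Finset.prod_range_add _ _ _).symm
  set R1 : ℕ := ∏ i ∈ Finset.range (k+5), (T + 1 + i) with hR1def
  set R2 : ℕ := ∏ i ∈ Finset.range (k+7), (T + 1 + (2*k+11+i)) with hR2def
  set R2m : ℕ := ∏ i ∈ Finset.range (k+5), (T + 1 + (2*k+11+i)) with hR2mdef
  -- split off the two top factors of R2
  have s1 : R2 = (∏ i ∈ Finset.range (k+6), (T + 1 + (2*k+11+i))) * (T + 1 + (2*k+11+(k+6))) :=
    Finset.prod_range_succ _ (k+6)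
  have s2 : (∏ i ∈ Finset.range (k+6), (T + 1 + (2*k+11+i)))
      = R2m * (T + 1 + (2*k+11+(k+5))) := Finset.prod_range_succ _ (k+5)
  have hR2 : R2 = R2m * ((T+3*k+17) * (T+3*k+18)) := by
    rw [s1, s2, show T+1+(2*k+11+(k+5)) = T+3*k+17 from by omega,
      show T+1+(2*k+11+(k+6)) = T+3*k+18 from by omega, mul_assoc]
  -- pointwise comparison
  have hpoint : ∀ i ∈ Finset.range (k+5),
      (T+3*k+16) * (T + 1 + i) ≤ (T + 1 + (2*k+11+i)) * (T+k+5) := by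
    intro i hi
    have hik : i ≤ k+4 := by
      have := Finset.mem_range.mp hi; omega
    have hmul : i*(2*k+11) ≤ (k+4)*(2*k+11) := Nat.mul_le_mul_right _ hik
    nlinarith [hmul]
  have hE1 : (T+3*k+16)^(k+5) * R1 ≤ R2m * (T+k+5)^(k+5) := by
    calc (T+3*k+16)^(k+5) * R1
        = ∏ i ∈ Finset.range (k+5), ((T+3*k+16) * (T + 1 + i)) := by
          rw [Finset.prod_mul_distrib, Finset.prod_const, Finset.card_range]
      _ ≤ ∏ i ∈ Finset.range (k+5), ((T + 1 + (2*k+11+i)) * (T+k+5)) :=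
          Finset.prod_le_prod' hpoint
      _ = R2m * (T+k+5)^(k+5) := by
          rw [Finset.prod_mul_distrib, Finset.prod_const, Finset.card_range]
  -- lemma L1 : 15 * F^(k+5) ≤ C^(k+5)
  have hlb := pow_lb (T+k+5) (2*k+11) (k+1)
  rw [show k+1+4 = k+5 from by omega, show k+1+3 = k+4 from by omega,
    show k+1+2 = k+3 from by omega, show k+1+1 = k+2 from by omega,
    show (T+k+5) + (2*k+11) = T+3*k+16 from by omega] at hlb
  have hQ4 : 24*(2*(T+k+5))^4 + 48*(k+5)*(2*(T+k+5))^3*(2*k+11)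
        + 48*(k+5)*(k+4)*(2*(T+k+5))^2*(2*k+11)^2
        + 32*(k+5)*(k+4)*(k+3)*(2*(T+k+5))*(2*k+11)^3
        + 16*(k+5)*(k+4)*(k+3)*(k+2)*(2*k+11)^4
      = 360*(2*(T+k+5))^4
        + (464*k^8 + 16784*k^7 + 260400*k^6 + 2248656*k^5 + 11696784*k^4
            + 36820992*k^3 + 65816752*k^2 + 54685024*k + 8440320) := by
    rw [show 2*(T+k+5) = (k+5)*(k+6) from by linarith [ht, hsplitTT]]
    ring
  have hL1 : 15 * (T+k+5)^(k+5) ≤ (T+3*k+16)^(k+5) := by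
    refine Nat.le_of_mul_le_mul_left ?_ (show 0 < 384 from by norm_num)
    calc 384 * (15 * (T+k+5)^(k+5))
        = (T+k+5)^(k+1) * (360*(2*(T+k+5))^4) := by ring
      _ ≤ (T+k+5)^(k+1) * (24*(2*(T+k+5))^4 + 48*(k+5)*(2*(T+k+5))^3*(2*k+11)
            + 48*(k+5)*(k+4)*(2*(T+k+5))^2*(2*k+11)^2
            + 32*(k+5)*(k+4)*(k+3)*(2*(T+k+5))*(2*k+11)^3
            + 16*(k+5)*(k+4)*(k+3)*(k+2)*(2*k+11)^4) := by
          rw [hQ4]; exact Nat.mul_le_mul_left _ (Nat.le_add_right _ _)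
      _ = 16 * (24 * (T+k+5) ^ (k+5) + 24 * (k+5) * (T+k+5) ^ (k+4) * (2*k+11)
            + 12 * (k+5) * (k+4) * (T+k+5) ^ (k+3) * (2*k+11) ^ 2
            + 4 * (k+5) * (k+4) * (k+3) * (T+k+5) ^ (k+2) * (2*k+11) ^ 3
            + (k+5) * (k+4) * (k+3) * (k+2) * (T+k+5) ^ (k+1) * (2*k+11) ^ 4) := by
          ring
      _ ≤ 16 * (24 * (T+3*k+16)^(k+5)) := Nat.mul_le_mul_left _ hlb
      _ = 384 * (T+3*k+16)^(k+5) := by ring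
  -- lemma L2
  have h2A : 2*(T+3*k+17) = (k+6)*(k+9) := by
    have e : (k+6)*(k+9) = (k+4)*(k+5)+(6*k+34) := by ring
    linarith [ht, e]
  have h2B : 2*(T+3*k+18) = (k+7)*(k+8) := by
    have e : (k+7)*(k+8) = (k+4)*(k+5)+(6*k+36) := by ring
    linarith [ht, e]
  have hpoly : 15^6*(((k+6)*(k+9))*((k+7)*(k+8)))^6
      = 2^12*((2*k+13)*(2*k+11))^11
        + (6616019297777411290945097728 + 20783091020459450430310514688*k
          + 31065168450356380875194712064*k^2 + 29380383540707200122651279360*k^3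
          + 19721475842210887964924538880*k^4 + 9990075788863629455600557056*k^5
          + 3964632603038754716116700736*k^6 + 1263428272793866356762608448*k^7
          + 328904602988707494056730480*k^8 + 70843500513018483816708000*k^9
          + 12759697199065529840633916*k^10 + 1942163257513129698988116*k^11
          + 253067990741378025867273*k^12 + 28719183290151358197000*k^13
          + 2899072271880398335710*k^14 + 265261827041587349388*k^15
          + 22108062641386550223*k^16 + 1649798852085291024*k^17
          + 106375728419376560*k^18 + 5669156638652460*k^19
          + 237928395490487*k^20 + 7430235392712*k^21 + 159488724566*k^22
          + 2050312500*k^23 + 11390625*k^24) := by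
    ring
  have hL2 : ((2*k+13)*(2*k+11))^11 ≤ 15^6*((T+3*k+17)*(T+3*k+18))^6 := by
    have e : 2^12*(15^6*((T+3*k+17)*(T+3*k+18))^6)
        = 15^6*((2*(T+3*k+17))*(2*(T+3*k+18)))^6 := by ring
    rw [h2A, h2B] at e
    refine Nat.le_of_mul_le_mul_left ?_ (show 0 < 2^12 from by norm_num)
    rw [e, hpoly]
    exact Nat.le_add_right _ _
  -- main chain
  have hYpos : 0 < ((T+k+5)^(k+5))^6 := pow_pos (pow_pos (by omega) _) _
  have hmain : ((2*k+13)*(2*k+11))^11 * R1^6 ≤ R2^6 :=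
    combine (((2*k+13)*(2*k+11))^11) ((T+3*k+17)*(T+3*k+18)) ((T+3*k+16)^(k+5))
      ((T+k+5)^(k+5)) R1 R2m R2 (pow_pos (by omega) _) hL1 hL2 hE1 hR2
  have d1 : (2*(k+5)+3)‼ = (2*k+13)*(2*k+11)‼ := by
    rw [show 2*(k+5)+3 = (2*k+11)+2 from by ring, Nat.doubleFactorial_add_two,
      show 2*k+11+2 = 2*k+13 from by ring]
  have d2 : (2*(k+5)+1)‼ = (2*k+11)*(2*k+9)‼ := by
    rw [show 2*(k+5)+1 = (2*k+9)+2 from by ring, Nat.doubleFactorial_add_two,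
      show 2*k+9+2 = 2*k+11 from by ring]
  have hDD : (2*(k+5)+3)‼ * (2*(k+5)+1)‼
      = ((2*k+13)*(2*k+11)) * ((2*(k+4)+3)‼ * (2*(k+4)+1)‼) := by
    rw [d1, d2, show 2*(k+4)+3 = (2*k+11) from by ring,
      show 2*(k+4)+1 = (2*k+9) from by ring]
    ring
  have hPP' : (∏ i ∈ Finset.Icc 1 (2*(k+5)+3), (T' + i)) * R1
      = (∏ i ∈ Finset.Icc 1 (2*(k+4)+3), (T + i)) * R2 := by
    rw [hP, hP', mul_comm _ R1, hR1def, hR2def, hsplit2, ← hsplit1]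
  have hR1pos : 0 < R1 := Finset.prod_pos fun i _ => by omega
  exact finish_step ((2*(k+4)+3)‼ * (2*(k+4)+1)‼) ((2*(k+5)+3)‼ * (2*(k+5)+1)‼)
    ((2*k+13)*(2*k+11)) (∏ i ∈ Finset.Icc 1 (2*(k+4)+3), (T + i))
    (∏ i ∈ Finset.Icc 1 (2*(k+5)+3), (T' + i)) R1 R2
    hDD hPP' hmain ih hR1pos (Nat.mul_pos (by omega) (by omega))

private lemma aux : ∀ k : ℕ, NatIneq (k+4)
  | 0 => base4
  | (k+1) => step k (aux k)

private lemma key_nat (m : ℕ) (hm : 3 ≤ m) : NatIneq m := by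
  rcases eq_or_lt_of_le hm with h | h
  · exact h ▸ base3
  · obtain ⟨k, rfl⟩ : ∃ k, m = k+4 := ⟨m-4, by omega⟩
    exact aux k

/-- **Inequality (30) of Liebeck–Shalev–Tiep** (induction step in the proof of
Lemma 4.1). For every `m ≥ 3`,
`∏_{i=1}^{2m+3} (m(m+1)/2 + i) > ((2m+3)‼·(2m+1)‼)^{11/6}`, equivalently
`(∏_{i=1}^{2m+3} (m(m+1)/2 + i))^6 > ((2m+3)‼·(2m+1)‼)^{11}`. -/
theorem staircase_induction_step (m : ℕ) (hm : 3 ≤ m) :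
    (((∏ i ∈ Finset.Icc 1 (2 * m + 3), (m * (m + 1) / 2 + i) : ℕ) : ℝ) >
      (((2 * m + 3)‼ * (2 * m + 1)‼ : ℕ) : ℝ) ^ ((11 : ℝ) / 6)) ∧
    ((∏ i ∈ Finset.Icc 1 (2 * m + 3), (m * (m + 1) / 2 + i)) ^ 6 >
      ((2 * m + 3)‼ * (2 * m + 1)‼) ^ 11) := by
  have hnat : ((2*m+3)‼ * (2*m+1)‼) ^ 11
      < (∏ i ∈ Finset.Icc 1 (2*m+3), (m*(m+1)/2 + i)) ^ 6 := key_nat m hm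
  constructor
  · have hD0 : (0:ℝ) ≤ (((2*m+3)‼ * (2*m+1)‼ : ℕ) : ℝ) := Nat.cast_nonneg _
    have key : ((((2*m+3)‼ * (2*m+1)‼ : ℕ) : ℝ) ^ ((11:ℝ)/6)) ^ (6:ℕ)
        < (((∏ i ∈ Finset.Icc 1 (2*m+3), (m*(m+1)/2 + i) : ℕ)) : ℝ) ^ (6:ℕ) := by
      rw [← Real.rpow_natCast ((((2*m+3)‼ * (2*m+1)‼ : ℕ) : ℝ) ^ ((11:ℝ)/6)) 6,
        ← Real.rpow_mul hD0,
        show (11:ℝ)/6 * ((6:ℕ):ℝ) = ((11:ℕ):ℝ) from by push_cast; norm_num,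
        Real.rpow_natCast]
      exact_mod_cast hnat
    exact lt_of_pow_lt_pow_left₀ 6 (Nat.cast_nonneg _) key
  · exact hnat

end McKayGraphs
end
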